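/- Let M be a von Neumann algebra and V a partial isometry in M with initial projection P = V*V and final projection Q = VV* satisfying PQ = 0. Let S be a positive operator in PMP with 0 ≤ S ≤ (1−ε)P for some ε > 0, let C = √(P − S²), and let R = C² + CSV* + VCS + VS²V* (which is a projection in M). If A and B are operators in M such that PA = A, QB = B, and R(A+B) = A+B, then B = V(C⁻¹S)A, where C⁻¹ denotes the inverse of C in the corner algebra PMP. -/
import Mathlib


noncomputable section

namespace Stmt6

variable {H : Type*} [NormedAddCommGroup H] [InnerProductSpace ℂ H] [CompleteSpace H]

set_option maxHeartbeats 1000000 in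
set_option synthInstance.maxHeartbeats 400000 in
/-- Let `V ∈ M` be a partial isometry with initial projection `P = V*V`
and final projection `Q = VV*` satisfying `PQ = 0`. Let `S` be a positive operator in the
corner `PMP` with `0 ≤ S ≤ (1-ε)P` for some `ε > 0`, let `C = √(P - S²)` (the positive
square root in `PMP`), and let `R = C² + CSV* + VCS + VS²V*`, a projection in `M`.
If `A, B ∈ M` satisfy `PA = A`, `QB = B` and `R(A+B) = A+B`, then `B = V (C⁻¹ S) A`,
where `C⁻¹` is the inverse of `C` in `PMP`. -/
theorem stmt6 (M : VonNeumannAlgebra H)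
    (V P Q : H →L[ℂ] H) (hV : V ∈ M)
    (hP : P = star V * V) (hQ : Q = V * star V)
    (hPproj : P * P = P) (hPQ : P * Q = 0)
    (S : H →L[ℂ] H) (hSM : S ∈ M) (hSpos : S.IsPositive)
    (hScorner : P * S * P = S)
    (ε : ℝ) (hε : 0 < ε)
    (hSle : ((((1 : ℝ) - ε : ℝ) : ℂ) • P - S).IsPositive)
    (C : H →L[ℂ] H) (hCM : C ∈ M) (hCpos : C.IsPositive)
    (hCcorner : P * C * P = C) (hCsq : C * C = P - S * S)
    (R : H →L[ℂ] H)
    (hR : R = C * C + C * S * star V + V * C * S + V * S * S * star V)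
    (hRproj : R * R = R ∧ star R = R)
    (A B : H →L[ℂ] H) (hA : A ∈ M) (hB : B ∈ M)
    (hPA : P * A = A) (hQB : Q * B = B) (hRAB : R * (A + B) = A + B) :
    ∃ Cinv : H →L[ℂ] H, Cinv ∈ M ∧ P * Cinv * P = Cinv ∧
      Cinv * C = P ∧ C * Cinv = P ∧ B = V * (Cinv * S) * A := by
  -- basic star facts
  have hPsa : star P = P := by rw [hP, star_mul, star_star]
  have hQsa : star Q = Q := by rw [hQ, star_mul, star_star]
  have hSsa : star S = S := hSpos.isSelfAdjoint
  have hV'V : star V * V = P := hP.symm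
  have hQP : Q * P = 0 := by
    have h := congrArg star hPQ
    rwa [star_mul, hPsa, hQsa, star_zero] at h
  -- V * P = V
  have hVP : V * P = V := by
    have key : star (V * P - V) * (V * P - V) = 0 := by
      have e1 : star V * (V * P) = P := by rw [← mul_assoc, hV'V, hPproj]
      rw [star_sub, star_mul, hPsa, sub_mul, mul_sub, mul_sub,
        mul_assoc P (star V) (V * P), e1, mul_assoc P (star V) V, hV'V, hPproj]
      simp
    have := (CStarRing.star_mul_self_eq_zero_iff _).mp key
    exact sub_eq_zero.mp this
  have hPV' : P * star V = star V := by
    have h := congrArg star hVP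
    rwa [star_mul, hPsa] at h
  have hQV : Q * V = V := by rw [hQ, mul_assoc, hV'V, hVP]
  have hPV : P * V = 0 := by rw [← hQV, ← mul_assoc, hPQ, zero_mul]
  have hV'P : star V * P = 0 := by
    have h := congrArg star hPV
    rwa [star_mul, hPsa, star_zero] at h
  -- corner facts
  have corner_left : ∀ X : H →L[ℂ] H, P * X * P = X → P * X = X := by
    intro X hX
    conv_lhs => rw [← hX]
    rw [← mul_assoc, ← mul_assoc, hPproj, hX]
  have corner_right : ∀ X : H →L[ℂ] H, P * X * P = X → X * P = X := by
    intro X hX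
    conv_lhs => rw [← hX]
    rw [mul_assoc (P * X) P P, hPproj, hX]
  have hPS : P * S = S := corner_left S hScorner
  have hSP : S * P = S := corner_right S hScorner
  have hPC : P * C = C := corner_left C hCcorner
  have hCP : C * P = C := corner_right C hCcorner
  have hSQ : S * Q = 0 := by rw [← hSP, mul_assoc, hPQ, mul_zero]
  have hQC : Q * C = 0 := by rw [← hPC, ← mul_assoc, hQP, zero_mul]
  have hQA : Q * A = 0 := by rw [← hPA, ← mul_assoc, hQP, zero_mul]
  have hSB : S * B = 0 := by rw [← hQB, ← mul_assoc, hSQ, zero_mul]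
  have hV'A : star V * A = 0 := by rw [← hPA, ← mul_assoc, hV'P, zero_mul]
  -- main algebraic computation
  have hBQ : B = Q * (A + B) := by rw [mul_add, hQA, hQB, zero_add]
  have hQR : Q * R = V * C * S + V * S * S * star V := by
    simp only [hR, mul_add, ← mul_assoc, hQC, hQV, zero_mul, zero_add]
  have hB1 : B = V * C * S * A + V * S * S * (star V * B) := by
    calc B = Q * (A + B) := hBQ
      _ = Q * (R * (A + B)) := by rw [hRAB]
      _ = Q * R * (A + B) := by rw [mul_assoc]
      _ = (V * C * S + V * S * S * star V) * (A + B) := by rw [hQR]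
      _ = V * C * S * A + V * C * S * B + (V * S * S * star V * A + V * S * S * star V * B) := by
          rw [add_mul, mul_add, mul_add]
      _ = V * C * S * A + V * S * S * (star V * B) := by
          rw [mul_assoc (V * C) S B, hSB, mul_zero, add_zero,
            mul_assoc (V * S * S) (star V) A, hV'A, mul_zero, zero_add,
            mul_assoc (V * S * S) (star V) B]
  have hY : star V * B = C * S * A + S * S * (star V * B) := by
    conv_lhs => rw [hB1]
    simp only [mul_add, ← mul_assoc]
    rw [hV'V, hPC, hPS, mul_assoc (S * S) (star V) B]
  -- norm bound en route to invertibility of 1 - S * S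
  set t' : ℝ := max (1 - ε) 0 with ht'
  have ht'lt : t' < 1 := max_lt (by linarith) one_pos
  have ht'0 : (0 : ℝ) ≤ t' := le_max_right _ _
  have hS0 : (0 : H →L[ℂ] H) ≤ S := (ContinuousLinearMap.nonneg_iff_isPositive S).mpr hSpos
  have hP0 : (0 : H →L[ℂ] H) ≤ P := hP ▸ star_mul_self_nonneg V
  have hP1 : P ≤ 1 := by
    have hsa : star (1 - P) = 1 - P := by rw [star_sub, star_one, hPsa]
    have hsq : (1 - P) * (1 - P) = 1 - P := by
      rw [sub_mul, mul_sub, mul_sub, one_mul, mul_one, hPproj]; abel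
    have : (0 : H →L[ℂ] H) ≤ 1 - P := by
      calc (0 : H →L[ℂ] H) ≤ star (1 - P) * (1 - P) := star_mul_self_nonneg _
        _ = 1 - P := by rw [hsa, hsq]
    exact sub_nonneg.mp this
  have smul_nonneg' : ∀ (r : ℝ), 0 ≤ r → ∀ X : H →L[ℂ] H, 0 ≤ X → (0 : H →L[ℂ] H) ≤ r • X := by
    intro r hr X hX
    have h : r • X = star (((Real.sqrt r : ℝ) : ℂ) • (1 : H →L[ℂ] H)) * X
        * (((Real.sqrt r : ℝ) : ℂ) • (1 : H →L[ℂ] H)) := by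
      rw [star_smul, star_one, smul_mul_assoc, one_mul, mul_smul_comm, mul_one, smul_smul]
      rw [RCLike.star_def, Complex.conj_ofReal, ← Complex.ofReal_mul,
        Real.mul_self_sqrt hr, Complex.coe_smul]
    rw [h]
    exact star_left_conjugate_nonneg hX _
  have hSleP : S ≤ (1 - ε) • P := by
    have h := (ContinuousLinearMap.nonneg_iff_isPositive _).mpr hSle
    rw [Complex.coe_smul] at h
    exact sub_nonneg.mp h
  have hSle1 : S ≤ t' • (1 : H →L[ℂ] H) := by
    have hdecomp : t' • (1 : H →L[ℂ] H) - S
        = t' • ((1 : H →L[ℂ] H) - P) + (t' - (1 - ε)) • P + ((1 - ε) • P - S) := by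
      simp only [smul_sub, sub_smul]; abel
    have h1 : (0 : H →L[ℂ] H) ≤ t' • ((1 : H →L[ℂ] H) - P) :=
      smul_nonneg' t' ht'0 _ (sub_nonneg.mpr hP1)
    have h2 : (0 : H →L[ℂ] H) ≤ (t' - (1 - ε)) • P :=
      smul_nonneg' _ (sub_nonneg.mpr (le_max_left _ _)) _ hP0
    have h3 : (0 : H →L[ℂ] H) ≤ (1 - ε) • P - S := sub_nonneg.mpr hSleP
    have : (0 : H →L[ℂ] H) ≤ t' • (1 : H →L[ℂ] H) - S := by
      rw [hdecomp]; exact add_nonneg (add_nonneg h1 h2) h3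
    exact sub_nonneg.mp this
  have hSnorm : ‖S‖ ≤ t' := by
    calc ‖S‖ ≤ ‖t' • (1 : H →L[ℂ] H)‖ :=
          CStarAlgebra.norm_le_norm_of_nonneg_of_le hS0 hSle1
      _ = ‖t'‖ * ‖(1 : H →L[ℂ] H)‖ := norm_smul _ _
      _ ≤ t' * 1 := by
          rw [Real.norm_eq_abs, abs_of_nonneg ht'0]
          exact mul_le_mul_of_nonneg_left ContinuousLinearMap.norm_id_le ht'0
      _ = t' := mul_one _
  have hSSnorm : ‖S * S‖ < 1 := by
    have h1 : ‖S‖ < 1 := lt_of_le_of_lt hSnorm ht'lt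
    calc ‖S * S‖ ≤ ‖S‖ * ‖S‖ := norm_mul_le _ _
      _ < 1 := by nlinarith [norm_nonneg S]
  -- the unit 1 - S * S
  set u : (H →L[ℂ] H)ˣ := Units.oneSub (S * S) hSSnorm with hu
  have huval : (↑u : H →L[ℂ] H) = 1 - S * S := rfl
  -- u⁻¹ belongs to M (double commutant)
  have huinvM : (↑u⁻¹ : H →L[ℂ] H) ∈ M := by
    have hmem : (↑u⁻¹ : H →L[ℂ] H) ∈
        Set.centralizer (Set.centralizer (M : Set (H →L[ℂ] H))) := by
      rw [Set.mem_centralizer_iff]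
      intro z hz
      rw [Set.mem_centralizer_iff] at hz
      have hzS : S * z = z * S := hz S hSM
      have hzu : (↑u : H →L[ℂ] H) * z = z * ↑u := by
        rw [huval, sub_mul, mul_sub, one_mul, mul_one, mul_assoc, hzS, ← mul_assoc, hzS,
          mul_assoc]
      have key : (↑u : H →L[ℂ] H) * (z * ↑u⁻¹) = ↑u * (↑u⁻¹ * z) := by
        rw [← mul_assoc, hzu, mul_assoc, u.mul_inv, mul_one, ← mul_assoc, u.mul_inv, one_mul]
      exact (Units.mul_right_inj u).mp key
    rw [M.centralizer_centralizer] at hmem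
    exact hmem
  -- commutation of u with P
  have hPSS : P * (S * S) = S * S := by rw [← mul_assoc, hPS]
  have hSSP : S * S * P = S * S := by rw [mul_assoc, hSP]
  have h1Pu : ((1 : H →L[ℂ] H) - P) * ↑u = 1 - P := by
    rw [huval, sub_mul, mul_sub, mul_sub, one_mul, mul_one, one_mul, hPSS]; abel
  have hu1P : (↑u : H →L[ℂ] H) * ((1 : H →L[ℂ] H) - P) = 1 - P := by
    rw [huval, mul_sub, sub_mul, sub_mul, one_mul, mul_one, one_mul, hSSP]; abel
  have h1Puinv : (↑u⁻¹ : H →L[ℂ] H) * ((1 : H →L[ℂ] H) - P) = 1 - P := by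
    conv_lhs => rw [← hu1P, ← mul_assoc, u.inv_mul, one_mul]
  have huinv1P : ((1 : H →L[ℂ] H) - P) * ↑u⁻¹ = 1 - P := by
    conv_lhs => rw [← h1Pu, mul_assoc, u.mul_inv, mul_one]
  have hPuinv : P * (↑u⁻¹ : H →L[ℂ] H) = ↑u⁻¹ * P := by
    have h : (↑u⁻¹ : H →L[ℂ] H) - ↑u⁻¹ * P = ↑u⁻¹ - P * ↑u⁻¹ := by
      calc (↑u⁻¹ : H →L[ℂ] H) - ↑u⁻¹ * P = ↑u⁻¹ * ((1 : H →L[ℂ] H) - P) := by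
            rw [mul_sub, mul_one]
        _ = ((1 : H →L[ℂ] H) - P) * ↑u⁻¹ := by rw [h1Puinv, huinv1P]
        _ = ↑u⁻¹ - P * ↑u⁻¹ := by rw [sub_mul, one_mul]
    exact (sub_right_inj.mp h).symm
  -- C * C = u - (1 - P)
  have hCCu : C * C = ↑u - ((1 : H →L[ℂ] H) - P) := by
    rw [hCsq, huval]; abel
  -- left inverse property
  have hLinv : (↑u⁻¹ * C) * C = P := by
    rw [mul_assoc, hCCu, mul_sub, u.inv_mul, h1Puinv, sub_sub_cancel]
  -- right inverse property for C * u⁻¹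
  have hRinv : C * (C * ↑u⁻¹) = P := by
    rw [← mul_assoc, hCCu, sub_mul, u.mul_inv, huinv1P, sub_sub_cancel]
  -- the two coincide
  have hLR : (↑u⁻¹ : H →L[ℂ] H) * C = C * ↑u⁻¹ := by
    calc (↑u⁻¹ : H →L[ℂ] H) * C = ↑u⁻¹ * C * P := by rw [mul_assoc, hCP]
      _ = (↑u⁻¹ * C) * (C * (C * ↑u⁻¹)) := by rw [hRinv]
      _ = ((↑u⁻¹ * C) * C) * (C * ↑u⁻¹) := by
          rw [← mul_assoc (↑u⁻¹ * C : H →L[ℂ] H) C (C * ↑u⁻¹)]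
      _ = P * (C * ↑u⁻¹) := by rw [hLinv]
      _ = P * C * ↑u⁻¹ := by rw [mul_assoc]
      _ = C * ↑u⁻¹ := by rw [hPC]
  -- the final identity for B
  have hBVY : B = V * (star V * B) := by rw [← mul_assoc, ← hQ, hQB]
  have huY : (↑u : H →L[ℂ] H) * (star V * B) = C * S * A := by
    rw [huval, sub_mul, one_mul]
    nth_rewrite 1 [hY]
    rw [mul_assoc S S (star V * B), add_sub_cancel_right]
  have hYval : star V * B = ↑u⁻¹ * (C * S * A) := by
    rw [← huY, ← mul_assoc, u.inv_mul, one_mul]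
  -- define the inverse
  refine ⟨↑u⁻¹ * C, mul_mem huinvM hCM, ?_, hLinv, ?_, ?_⟩
  · -- corner
    rw [← mul_assoc P ↑u⁻¹ C, hPuinv, mul_assoc (↑u⁻¹ : H →L[ℂ] H) P C, hPC,
      mul_assoc, hCP]
  · -- right inverse
    rw [hLR, hRinv]
  · -- B = V * (Cinv * S) * A
    rw [hBVY, hYval]
    simp only [mul_assoc]

end Stmt6
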